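/- arXiv:2111.06374 — 2 statements merged into one kernel-verified Lean document; each statement's English description precedes it below -/
import Mathlib

section
/- If X_1, X_2, ... are i.i.d. real random variables with mean x̄ and finite variance σ², then the standardized sums Y_N = Σ_{k=1}^N (X_k - x̄)/(σ√N) converge weakly (in distribution) to a standard normal random variable. -/
/-!
By independence the characteristic function of `(√N)⁻¹ ∑_{k<N} Z_k` is `φ(t/√N)^N`, where `φ` is
the common characteristic function, and for centred `Z` of unit variance the second-order
expansion `φ(s) = 1 - s²/2 + o(s²)` gives `(1 - t²/(2N) + o(1/N))^N → e^{-t²/2}`.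
The general case follows by standardizing `Z_k = (X_k - x̄)/σ`.
-/

open MeasureTheory Filter ProbabilityTheory

section

variable {Ω : Type*} [MeasurableSpace Ω] {P : Measure Ω}

lemma charFun_map_real_eq_integral {Y : Ω → ℝ} (hY : AEMeasurable Y P) (t : ℝ) :
    charFun (P.map Y) t = ∫ ω, Complex.exp (Complex.I * t * Y ω) ∂P := by
  rw [charFun_apply_real, integral_map hY (by fun_prop)]
  simp_rw [mul_right_comm _ _ Complex.I, mul_comm _ Complex.I]

lemma tendsto_integral_exp_inv_sqrt_mul_sum [IsProbabilityMeasure P] {Z : ℕ → Ω → ℝ}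
    (hindep : iIndepFun Z P) (hident : ∀ k, IdentDistrib (Z k) (Z 0) P P)
    (h0 : P[Z 0] = 0) (h1 : P[Z 0 ^ 2] = 1) (t : ℝ) :
    Tendsto (fun N : ℕ => ∫ ω, Complex.exp
        (Complex.I * t * ((√N)⁻¹ * ∑ k ∈ Finset.range N, Z k ω : ℝ)) ∂P)
      atTop (nhds (Complex.exp (-(t : ℂ) ^ 2 / 2))) := by
  convert tendsto_charFun_inv_sqrt_mul_pow (hident 0).aemeasurable_fst h0 h1 t using 2 with N
  rw [← charFun_inv_sqrt_mul_sum hindep hident, charFun_map_real_eq_integral]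
  exact (Finset.aemeasurable_fun_sum _ fun k _ => (hident k).aemeasurable_fst).const_mul _

end

/-- Central limit theorem for i.i.d. real random variables with mean `x̄` and finite
variance `σ² > 0`: the characteristic functions of the standardized sums
`Y_N = ∑_{k<N} (X_k - x̄)/(σ√N)` converge pointwise to `e^{-t²/2}`, i.e. `Y_N`
converges weakly to a standard normal random variable. -/
theorem clt_characteristic_functions
    {Ω : Type*} [MeasurableSpace Ω] (P : Measure Ω) [IsProbabilityMeasure P]
    (X : ℕ → Ω → ℝ) (hmeas : ∀ k, Measurable (X k))
    (hindep : ProbabilityTheory.iIndepFun X P)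
    (hident : ∀ k, Measure.map (X k) P = Measure.map (X 0) P)
    (hL2 : MemLp (X 0) 2 P)
    (xbar σ : ℝ) (hσ : 0 < σ)
    (hmean : ∫ ω, X 0 ω ∂P = xbar)
    (hvar : ∫ ω, (X 0 ω - xbar) ^ 2 ∂P = σ ^ 2) :
    ∀ t : ℝ,
      Tendsto
        (fun (N : ℕ) => ∫ ω, Complex.exp (Complex.I * t *
            ((∑ k ∈ Finset.range N, (X k ω - xbar)) / (σ * Real.sqrt N))) ∂P)
        atTop (nhds (Complex.exp (-(t : ℂ) ^ 2 / 2))) := by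
  intro t
  set Z : ℕ → Ω → ℝ := fun k ω => (X k ω - xbar) / σ with hZ
  have hZindep : iIndepFun Z P := hindep.comp (fun _ x => (x - xbar) / σ) (fun _ => by fun_prop)
  have hZident (k : ℕ) : IdentDistrib (Z k) (Z 0) P P :=
    IdentDistrib.comp ⟨(hmeas k).aemeasurable, (hmeas 0).aemeasurable, hident k⟩
      (u := fun x => (x - xbar) / σ) (by fun_prop)
  have hZmean : P[Z 0] = 0 := by
    simp only [hZ, integral_div, integral_sub (hL2.integrable one_le_two) (integrable_const xbar),
      hmean, integral_const]
    simp
  have hZvar : P[Z 0 ^ 2] = 1 := by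
    simp only [hZ, Pi.pow_apply, div_pow, integral_div, hvar]
    exact div_self (pow_ne_zero 2 hσ.ne')
  convert tendsto_integral_exp_inv_sqrt_mul_sum hZindep hZident hZmean hZvar t using 4 with N ω
  simp only [hZ, ← Finset.sum_div]
  push_cast
  field_simp
end

section
/- For a probability measure μ on ℝ^n that is absolutely continuous with respect to Lebesgue measure with bounded continuous density of compact support, the information dimension lim_{ε→0} H(Z^ε)/(-log ε) equals n, where H(Z^ε) is the Shannon entropy of the coarse-graining of μ over the uniform partition of ℝ^n into cubes of side ε. -/
open MeasureTheory Filter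

/-- The cube of side `ε` indexed by `k ∈ ℤⁿ` in the uniform partition of `ℝⁿ`. -/
def unifCube (n : ℕ) (ε : ℝ) (k : Fin n → ℤ) : Set (Fin n → ℝ) :=
  Set.univ.pi fun i => Set.Ico ((k i : ℝ) * ε) (((k i : ℝ) + 1) * ε)

/-- Shannon entropy of the coarse-graining of `μ` over the uniform partition of `ℝⁿ`
into cubes of side `ε`. -/
noncomputable def cubeEntropy (n : ℕ) (μ : Measure (Fin n → ℝ)) (ε : ℝ) : ℝ :=
  ∑' k : Fin n → ℤ, Real.negMulLog ((μ (unifCube n ε k)).toReal)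

/-!
Let the density be bounded by `C` and vanish outside the sup-norm ball of radius `R`.
Every cube of side `ε` then has mass at most `C εⁿ`, so each `-log p_k ≥ -log (C εⁿ)` and
`H(Z^ε) ≥ n log(1/ε) - log C`. Only the at most `(2R/ε + 2)ⁿ` cubes meeting the ball carry
mass, and the entropy of a distribution on `N` points is at most `log N` (Jensen for the
concave `negMulLog`), so `H(Z^ε) ≤ n log(1/ε) + n log(2R + 2)` for `ε ≤ 1`. Dividing by
`log(1/ε) → ∞` gives the limit `n`.
-/

open Real Finset Metric Function Topology

theorem Real.sum_negMulLog_le_log_card {α : Type*} {s : Finset α} {p : α → ℝ}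
    (h0 : ∀ a ∈ s, 0 ≤ p a) (h1 : ∑ a ∈ s, p a = 1) :
    ∑ a ∈ s, negMulLog (p a) ≤ log #s := by
  have hN : (0 : ℝ) < #s := by
    exact_mod_cast (nonempty_of_sum_ne_zero (h1 ▸ one_ne_zero)).card_pos
  have jensen := concaveOn_negMulLog.le_map_sum (t := s) (w := fun _ => (#s : ℝ)⁻¹) (p := p)
    (fun _ _ => by positivity) (by simp [hN.ne']) h0
  rw [← smul_sum, ← smul_sum, h1, smul_eq_mul, smul_eq_mul, mul_one, negMulLog, log_inv] at jensen
  calc ∑ a ∈ s, negMulLog (p a) ≤ #s * (-(#s : ℝ)⁻¹ * -log #s) :=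
        (inv_mul_le_iff₀ hN).1 jensen
    _ = log #s := by field_simp

theorem Real.neg_log_le_sum_negMulLog {α : Type*} {s : Finset α} {p : α → ℝ} {M : ℝ}
    (h0 : ∀ a ∈ s, 0 ≤ p a) (hM : ∀ a ∈ s, p a ≤ M) (h1 : ∑ a ∈ s, p a = 1) :
    -log M ≤ ∑ a ∈ s, negMulLog (p a) :=
  calc -log M = ∑ a ∈ s, p a * -log M := by rw [← sum_mul, h1, one_mul]
    _ ≤ ∑ a ∈ s, negMulLog (p a) := sum_le_sum fun a ha => by
      rcases (h0 a ha).eq_or_lt with h | h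
      · simp [← h]
      · have := log_le_log h (hM a ha)
        rw [negMulLog]
        nlinarith

theorem MeasureTheory.withDensity_apply_le_mul {α : Type*} [MeasurableSpace α] {ν : Measure α}
    {f : α → ENNReal} {c : ENNReal} (hf : ∀ x, f x ≤ c) {s : Set α} (hs : MeasurableSet s) :
    ν.withDensity f s ≤ c * ν s := by
  rw [withDensity_apply _ hs, ← setLIntegral_const]
  exact lintegral_mono hf

theorem MeasureTheory.withDensity_ofReal_compl_tsupport {α : Type*} [MeasurableSpace α]
    [TopologicalSpace α] [OpensMeasurableSpace α] (ν : Measure α) (q : α → ℝ) :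
    (ν.withDensity fun x => ENNReal.ofReal (q x)) (tsupport q)ᶜ = 0 := by
  have hs := (isClosed_tsupport q).isOpen_compl.measurableSet
  rw [withDensity_apply _ hs, setLIntegral_congr_fun hs fun x hx => by
    rw [image_eq_zero_of_notMem_tsupport hx, ENNReal.ofReal_zero], lintegral_zero]

theorem tendsto_div_of_sub_mul_mem_Icc {α : Type*} {l : Filter α} {f L : α → ℝ} {c a b : ℝ}
    (hL : Tendsto L l atTop) (hf : ∀ᶠ x in l, f x - c * L x ∈ Set.Icc a b) :
    Tendsto (fun x => f x / L x) l (𝓝 c) := by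
  have hlim (d : ℝ) : Tendsto (fun x => c + d / L x) l (𝓝 c) := by
    simpa using tendsto_const_nhds.add (tendsto_const_nhds.div_atTop hL)
  have hL0 := hL.eventually_gt_atTop 0
  refine tendsto_of_tendsto_of_tendsto_of_le_of_le' (hlim a) (hlim b) ?_ ?_ <;>
    filter_upwards [hf, hL0] with x hx hLx <;>
    rw [add_div' _ _ _ hLx.ne', div_le_div_iff_of_pos_right hLx] <;> linarith [hx.1, hx.2]

section UnifCube

variable {n : ℕ} {ε : ℝ}

/-- The cubes of side `ε` meeting the sup-norm ball of radius `r * ε` have indices in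
`cubeIndexBox n r`. -/
noncomputable def cubeIndexBox (n : ℕ) (r : ℝ) : Finset (Fin n → ℤ) :=
  Icc (fun _ => ⌊-r⌋) (fun _ => ⌊r⌋)

theorem mem_unifCube_iff (hε : 0 < ε) {x : Fin n → ℝ} {k : Fin n → ℤ} :
    x ∈ unifCube n ε k ↔ ∀ i, ⌊x i / ε⌋ = k i := by
  simp only [unifCube, Set.mem_univ_pi, Set.mem_Ico]
  refine forall_congr' fun i => ?_
  rw [Int.floor_eq_iff, le_div_iff₀ hε, div_lt_iff₀ hε]

theorem measurableSet_unifCube (k : Fin n → ℤ) : MeasurableSet (unifCube n ε k) :=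
  .univ_pi fun _ => measurableSet_Ico

theorem pairwise_disjoint_unifCube (hε : 0 < ε) : Pairwise (Disjoint on unifCube n ε) :=
  fun _ _ hkl => Set.disjoint_left.2 fun _ hk hl => hkl <| funext fun i =>
    ((mem_unifCube_iff hε).1 hk i).symm.trans ((mem_unifCube_iff hε).1 hl i)

theorem iUnion_unifCube (hε : 0 < ε) : ⋃ k, unifCube n ε k = Set.univ :=
  Set.eq_univ_of_forall fun x =>
    Set.mem_iUnion.2 ⟨fun i => ⌊x i / ε⌋, (mem_unifCube_iff hε).2 fun _ => rfl⟩

theorem tsum_measure_unifCube (hε : 0 < ε) (μ : Measure (Fin n → ℝ)) :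
    ∑' k, μ (unifCube n ε k) = μ Set.univ := by
  rw [← measure_iUnion (pairwise_disjoint_unifCube hε) measurableSet_unifCube,
    iUnion_unifCube hε]

theorem volume_unifCube (k : Fin n → ℤ) :
    volume (unifCube n ε k) = ENNReal.ofReal ε ^ n := by
  simp [unifCube, volume_pi_pi, Real.volume_Ico, add_mul]

theorem mem_cubeIndexBox_of_mem_unifCube (hε : 0 < ε) {R : ℝ} {x : Fin n → ℝ}
    {k : Fin n → ℤ} (hx : x ∈ unifCube n ε k) (hxR : ‖x‖ ≤ R) :
    k ∈ cubeIndexBox n (R / ε) := by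
  rw [mem_unifCube_iff hε] at hx
  have hxi i : |x i / ε| ≤ R / ε := by
    rw [abs_div, abs_of_pos hε]
    exact div_le_div_of_nonneg_right ((norm_le_pi_norm x i).trans hxR) hε.le
  refine mem_Icc.2 ⟨fun i => ?_, fun i => ?_⟩ <;> rw [← hx i]
  exacts [Int.floor_mono (abs_le.1 (hxi i)).1, Int.floor_mono (abs_le.1 (hxi i)).2]

theorem cubeIndexBox_nonempty {r : ℝ} (hr : 0 ≤ r) : (cubeIndexBox n r).Nonempty :=
  nonempty_Icc.2 fun _ => Int.floor_mono (neg_le_self hr)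

theorem card_cubeIndexBox_le {r : ℝ} (hr : 0 ≤ r) :
    (#(cubeIndexBox n r) : ℝ) ≤ (2 * r + 2) ^ n := by
  rw [cubeIndexBox, Pi.card_Icc, prod_const, card_univ, Fintype.card_fin, Int.card_Icc,
    Nat.cast_pow]
  gcongr
  have hfloor := Int.floor_le r
  have hfloor_neg := Int.lt_floor_add_one (-r)
  rw [← Int.cast_natCast, Int.toNat_eq_max]
  push_cast
  exact max_le (by linarith) (by linarith)

end UnifCube

section CoarseGraining

variable {n : ℕ} {ε R : ℝ} {μ : Measure (Fin n → ℝ)}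

theorem measure_unifCube_eq_zero (hε : 0 < ε) (hμR : μ (closedBall 0 R)ᶜ = 0)
    {k : Fin n → ℤ} (hk : k ∉ cubeIndexBox n (R / ε)) : μ (unifCube n ε k) = 0 :=
  measure_mono_null (fun _ hx hxR =>
    hk (mem_cubeIndexBox_of_mem_unifCube hε hx (mem_closedBall_zero_iff.1 hxR))) hμR

theorem cubeEntropy_eq_sum (hε : 0 < ε) (hμR : μ (closedBall 0 R)ᶜ = 0) :
    cubeEntropy n μ ε = ∑ k ∈ cubeIndexBox n (R / ε), negMulLog (μ (unifCube n ε k)).toReal :=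
  tsum_eq_sum fun _ hk => by rw [measure_unifCube_eq_zero hε hμR hk, ENNReal.toReal_zero,
    negMulLog_zero]

theorem sum_measure_unifCube_toReal [IsProbabilityMeasure μ] (hε : 0 < ε)
    (hμR : μ (closedBall 0 R)ᶜ = 0) :
    ∑ k ∈ cubeIndexBox n (R / ε), (μ (unifCube n ε k)).toReal = 1 := by
  rw [← ENNReal.toReal_sum fun _ _ => measure_ne_top μ _,
    ← tsum_eq_sum (L := .unconditional _) fun _ hk => measure_unifCube_eq_zero hε hμR hk,
    tsum_measure_unifCube hε, measure_univ, ENNReal.toReal_one]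

theorem cubeEntropy_le_log [IsProbabilityMeasure μ] (hε : 0 < ε) (hR : 0 ≤ R)
    (hμR : μ (closedBall 0 R)ᶜ = 0) : cubeEntropy n μ ε ≤ n * log (2 * (R / ε) + 2) := by
  rw [cubeEntropy_eq_sum hε hμR, ← log_pow]
  calc _ ≤ log #(cubeIndexBox n (R / ε)) :=
        sum_negMulLog_le_log_card (fun _ _ => ENNReal.toReal_nonneg)
          (sum_measure_unifCube_toReal hε hμR)
    _ ≤ log ((2 * (R / ε) + 2) ^ n) :=
        log_le_log (mod_cast (cubeIndexBox_nonempty (by positivity)).card_pos)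
          (card_cubeIndexBox_le (by positivity))

theorem neg_log_le_cubeEntropy [IsProbabilityMeasure μ] (hε : 0 < ε)
    (hμR : μ (closedBall 0 R)ᶜ = 0) {M : ℝ} (hM : ∀ k, (μ (unifCube n ε k)).toReal ≤ M) :
    -log M ≤ cubeEntropy n μ ε := by
  rw [cubeEntropy_eq_sum hε hμR]
  exact neg_log_le_sum_negMulLog (fun _ _ => ENNReal.toReal_nonneg) (fun k _ => hM k)
    (sum_measure_unifCube_toReal hε hμR)

end CoarseGraining

theorem toReal_withDensity_unifCube_le {n : ℕ} {ε C : ℝ} {q : (Fin n → ℝ) → ℝ}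
    (hC : ∀ x, q x ≤ C) (hC0 : 0 ≤ C) (hε : 0 ≤ ε) (k : Fin n → ℤ) :
    ((volume.withDensity fun x => ENNReal.ofReal (q x)) (unifCube n ε k)).toReal ≤ C * ε ^ n := by
  refine ENNReal.toReal_le_of_le_ofReal (by positivity) ?_
  rw [ENNReal.ofReal_mul hC0, ENNReal.ofReal_pow hε, ← volume_unifCube k]
  exact withDensity_apply_le_mul (fun x => ENNReal.ofReal_le_ofReal (hC x))
    (measurableSet_unifCube k)

theorem informationDimension_of_absolutely_continuous_general
    (n : ℕ) (q : (Fin n → ℝ) → ℝ)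
    (hqbdd : ∃ C, ∀ x, q x ≤ C) (hqsupp : HasCompactSupport q)
    (μ : Measure (Fin n → ℝ))
    (hμ : μ = volume.withDensity fun x => ENNReal.ofReal (q x))
    [IsProbabilityMeasure μ] :
    Tendsto (fun ε => cubeEntropy n μ ε / (-Real.log ε))
      (nhdsWithin 0 (Set.Ioi 0)) (nhds n) := by
  obtain ⟨C, hC⟩ := hqbdd
  have hC' x : q x ≤ max C 1 := (hC x).trans (le_max_left C 1)
  obtain ⟨R, hR, hqR⟩ := hqsupp.isBounded.subset_closedBall_lt 0 0
  have hμR : μ (closedBall 0 R)ᶜ = 0 :=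
    measure_mono_null (Set.compl_subset_compl.2 hqR) (hμ ▸ withDensity_ofReal_compl_tsupport _ q)
  refine tendsto_div_of_sub_mul_mem_Icc (a := -log (max C 1)) (b := n * log (2 * R + 2))
    (tendsto_neg_atBot_atTop.comp tendsto_log_nhdsGT_zero) ?_
  filter_upwards [Ioo_mem_nhdsGT one_pos] with ε ⟨hε, hε1⟩
  constructor
  · have hlower := neg_log_le_cubeEntropy hε hμR
      (hμ ▸ toReal_withDensity_unifCube_le hC' (by positivity) hε.le)
    rw [log_mul (by positivity) (by positivity), log_pow] at hlower
    linarith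
  · have hbox : log (2 * (R / ε) + 2) ≤ log (2 * R + 2) - log ε := by
      rw [← log_div (by positivity) hε.ne', add_div, mul_div_assoc]
      gcongr
      exact (le_div_iff₀ hε).2 (by linarith)
    have hupper := cubeEntropy_le_log (n := n) hε hR.le hμR
    have := mul_le_mul_of_nonneg_left hbox (Nat.cast_nonneg (α := ℝ) n)
    linarith

/-- A probability measure on `ℝⁿ` with a bounded continuous compactly supported density
(of finite differential entropy) has information dimension `n`. -/
theorem informationDimension_of_absolutely_continuous
    (n : ℕ) (q : (Fin n → ℝ) → ℝ) (hqcont : Continuous q) (hq0 : ∀ x, 0 ≤ q x)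
    (hqbdd : ∃ C, ∀ x, q x ≤ C) (hqsupp : HasCompactSupport q)
    (μ : Measure (Fin n → ℝ))
    (hμ : μ = volume.withDensity fun x => ENNReal.ofReal (q x))
    [IsProbabilityMeasure μ]
    (hfin : Integrable (fun x => q x * Real.log (q x)) volume) :
    Tendsto (fun ε => cubeEntropy n μ ε / (-Real.log ε))
      (nhdsWithin 0 (Set.Ioi 0)) (nhds n) :=
  informationDimension_of_absolutely_continuous_general n q hqbdd hqsupp μ hμ
end
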